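/- arXiv:1105.2062 — 6 statements merged into one kernel-verified Lean document; each statement's English description precedes it below -/
import Mathlib

section
/- For integer K ≥ 2, −∫_0^1 (log₂ ℓ) · K(K-1) ℓ (1-ℓ)^{K-2} dℓ = (1/ln 2) · ∑_{k=2}^{K} 1/k. -/
/-!
The weight `K(K-1)ℓ(1-ℓ)^(K-2)` is the density of the Beta(2, K-1) distribution, whose CDF
`ℓ * h ℓ` vanishes at `0` together with `ℓ log ℓ`. Integrating by parts against `log` therefore
turns the integral into `∫₀¹ h`, and `h ℓ = ∑_{j<K} (1-ℓ)^j - K(1-ℓ)^(K-1)` integrates termwise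
to `∑_{j<K} 1/(j+1) - 1 = ∑_{k=2}^K 1/k`.
-/

open MeasureTheory

open Real intervalIntegral in
theorem integral_log_mul_of_hasDerivAt_id_mul {h g : ℝ → ℝ} (hh : Continuous h)
    (hg : Continuous g) (hderiv : ∀ x, HasDerivAt (fun y => y * h y) (g x) x) {b : ℝ} (hb : 0 < b) :
    ∫ x in 0..b, log x * g x = log b * (b * h b) - ∫ x in 0..b, h x := by
  set F : ℝ → ℝ := fun x => log x * (x * h x) - ∫ t in 0..x, h t with hF
  have hF_cont : Continuous F := by
    have hF' : F = fun x => x * log x * h x - ∫ t in 0..x, h t := by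
      funext x; simp only [hF]; ring
    rw [hF']
    exact (continuous_mul_log.mul hh).sub (continuous_iff_continuousAt.2 fun x =>
      (hh.integral_hasStrictDerivAt 0 x).hasDerivAt.continuousAt)
  have hF_deriv : ∀ x ∈ Set.Ioo 0 b, HasDerivAt F (log x * g x) x := fun x hx => by
    have hx : x ≠ 0 := hx.1.ne'
    refine (((hasDerivAt_log hx).mul (hderiv x)).sub
      (hh.integral_hasStrictDerivAt 0 x).hasDerivAt).congr_deriv ?_
    field_simp
    ring
  have hint : IntervalIntegrable (fun x => log x * g x) volume 0 b :=
    intervalIntegrable_log'.mul_continuousOn hg.continuousOn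
  rw [integral_eq_sub_of_hasDerivAt_of_tendsto hb hF_deriv hint
    ((hF_cont.tendsto 0).mono_left nhdsWithin_le_nhds)
    ((hF_cont.tendsto b).mono_left nhdsWithin_le_nhds)]
  simp [hF]

/-- `x * betaCdfQuot n x` is the CDF of the Beta(2, n+1) distribution. -/
noncomputable def betaCdfQuot (n : ℕ) (x : ℝ) : ℝ :=
  ∑ j ∈ Finset.range (n + 2), (1 - x) ^ j - (n + 2) * (1 - x) ^ (n + 1)

theorem continuous_betaCdfQuot (n : ℕ) : Continuous (betaCdfQuot n) := by
  unfold betaCdfQuot; fun_prop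

theorem mul_betaCdfQuot (n : ℕ) (x : ℝ) :
    x * betaCdfQuot n x = 1 - (1 - x) ^ (n + 2) - (n + 2) * x * (1 - x) ^ (n + 1) := by
  have hgeom := geom_sum_mul (1 - x) (n + 2)
  unfold betaCdfQuot
  linear_combination -hgeom

theorem hasDerivAt_mul_betaCdfQuot (n : ℕ) (x : ℝ) :
    HasDerivAt (fun y => y * betaCdfQuot n y) ((n + 2) * (n + 1) * x * (1 - x) ^ n) x := by
  simp only [mul_betaCdfQuot]
  have hsub : HasDerivAt (fun y : ℝ => 1 - y) (-1) x := (hasDerivAt_id x).const_sub 1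
  refine (((hsub.pow (n + 2)).const_sub 1).sub
    (((hasDerivAt_id x).const_mul ((n : ℝ) + 2)).mul (hsub.pow (n + 1)))).congr_deriv ?_
  simp only [Nat.add_sub_cancel, show n + 2 - 1 = n + 1 by omega, id, Pi.pow_apply]
  push_cast
  ring

theorem integral_one_sub_pow (j : ℕ) : ∫ x in (0 : ℝ)..1, (1 - x) ^ j = 1 / (j + 1) := by
  simp [intervalIntegral.integral_comp_sub_left (fun x : ℝ => x ^ j)]

theorem sum_Icc_two_one_div (n : ℕ) :
    ∑ k ∈ Finset.Icc 2 (n + 2), (1 : ℝ) / k =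
      ∑ j ∈ Finset.range (n + 2), 1 / ((j : ℝ) + 1) - 1 := by
  induction n with
  | zero => norm_num
  | succ n ih =>
    rw [Finset.sum_Icc_succ_top (by omega), ih, Finset.sum_range_succ _ (n + 2)]
    push_cast
    ring

theorem integral_betaCdfQuot (n : ℕ) :
    ∫ x in (0 : ℝ)..1, betaCdfQuot n x = ∑ k ∈ Finset.Icc 2 (n + 2), (1 : ℝ) / k := by
  unfold betaCdfQuot
  rw [intervalIntegral.integral_sub, intervalIntegral.integral_finsetSum,
    intervalIntegral.integral_const_mul]
  · simp only [integral_one_sub_pow, sum_Icc_two_one_div]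
    push_cast
    field_simp
    ring
  · exact fun j _ => (continuous_const.sub continuous_id).pow j |>.intervalIntegrable 0 1
  all_goals exact Continuous.intervalIntegrable (by fun_prop) 0 1

theorem stmt_3 (K : ℕ) (hK : 2 ≤ K) :
    -∫ ℓ in Set.Ioc (0:ℝ) 1,
        Real.logb 2 ℓ * ((K : ℝ) * ((K : ℝ) - 1) * ℓ * (1 - ℓ) ^ (K - 2)) =
      (1 / Real.log 2) * ∑ k ∈ Finset.Icc 2 K, (1 : ℝ) / k := by
  obtain ⟨n, rfl⟩ : ∃ n, K = n + 2 := ⟨K - 2, by omega⟩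
  have hintegrand : ∀ ℓ : ℝ,
      Real.logb 2 ℓ * (((n + 2 : ℕ) : ℝ) * (((n + 2 : ℕ) : ℝ) - 1) * ℓ * (1 - ℓ) ^ (n + 2 - 2)) =
        (Real.log 2)⁻¹ * (Real.log ℓ * ((n + 2) * (n + 1) * ℓ * (1 - ℓ) ^ n)) := by
    intro ℓ
    simp only [Nat.add_sub_cancel, Real.logb]
    push_cast
    ring
  simp only [hintegrand]
  rw [← intervalIntegral.integral_of_le zero_le_one, intervalIntegral.integral_const_mul,
    integral_log_mul_of_hasDerivAt_id_mul (continuous_betaCdfQuot n) (by fun_prop)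
      (hasDerivAt_mul_betaCdfQuot n) one_pos, integral_betaCdfQuot]
  simp
end

section
/- Let K−1 thresholds be drawn i.i.d. uniform on [0,1], sorted as a_1 ≤ ... ≤ a_{K-1}, with a_0 = 0, a_K = 1. Then E[−∑_{k=1}^K (a_k − a_{k-1}) log₂(a_k − a_{k-1})] = (1/ln 2) ∑_{k=2}^K 1/k. -/
/-!
Write `D(s)` for the distance from `s ∈ (0, 1]` down to the nearest point of `{0, b₁, …, b_{K-1}}`
at or below it. On a spacing `(a_k, a_{k+1})` of length `Δ` one has `D(s) = s - a_k`, and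
`∫ -log (s - a_k) ds = Δ - Δ log Δ` over it, so `∫₀¹ -log D(s) ds = 1 + H` with `H` the spacing
entropy in nats. Writing `-log D(s) = ∫₀¹ u⁻¹ 𝟙{D(s) < u} du` and applying Tonelli, the expectation
of `1 + H` is `∫₀¹ u⁻¹ ∫₀¹ P(D(s) < u) ds du`. For `s < u` the event is sure, and for `s ≥ u` it is
the event that some `b_i` falls in `(s - u, s]`, of probability `1 - (1 - u)^(K-1)` by
independence. The `s`-integral is therefore `u + (1 - u)(1 - (1 - u)^(K-1))`, and dividing by `u`
leaves the polynomial `∑_{j<K} (1 - u)^j`, whose integral is the harmonic number `∑_{k ≤ K} 1/k`.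
-/

open MeasureTheory ProbabilityTheory Real Set
open scoped ENNReal

theorem setLIntegral_Ioc_ofReal {a b : ℝ} {f : ℝ → ℝ} (hab : a ≤ b)
    (hf : IntervalIntegrable f volume a b) (hf0 : ∀ x ∈ Ioc a b, 0 ≤ f x) :
    ∫⁻ x in Ioc a b, ENNReal.ofReal (f x) = ENNReal.ofReal (∫ x in a..b, f x) := by
  rw [intervalIntegral.integral_of_le hab, ofReal_integral_eq_lintegral_ofReal
    ((intervalIntegrable_iff_integrableOn_Ioc_of_le hab).1 hf)]
  exact (ae_restrict_iff' measurableSet_Ioc).2 (.of_forall hf0)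

theorem setLIntegral_Ioc_eq_sum_of_monotoneOn {a : ℕ → ℝ} {n : ℕ} (ha : MonotoneOn a (Iic n))
    (f : ℝ → ℝ≥0∞) :
    ∫⁻ s in Ioc (a 0) (a n), f s =
      ∑ k ∈ Finset.range n, ∫⁻ s in Ioc (a k) (a (k + 1)), f s := by
  induction n with
  | zero => simp
  | succ n ih =>
    have ha' : MonotoneOn a (Iic n) := ha.mono (Iic_subset_Iic.2 n.le_succ)
    rw [Finset.sum_range_succ, ← ih ha',
      ← lintegral_union measurableSet_Ioc (Ioc_disjoint_Ioc_of_le le_rfl),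
      Ioc_union_Ioc_eq_Ioc (ha' (Nat.zero_le n) (mem_Iic.2 le_rfl) (Nat.zero_le n))
        (ha n.le_succ (mem_Iic.2 le_rfl) n.le_succ)]

theorem setLIntegral_Ioc_inv {x : ℝ} (hx : 0 < x) (hx1 : x ≤ 1) :
    ∫⁻ u in Ioc x 1, ENNReal.ofReal u⁻¹ = ENNReal.ofReal (-log x) := by
  have hint : IntervalIntegrable (fun u : ℝ => u⁻¹) volume x 1 :=
    intervalIntegrable_inv_iff.2 (.inr (by simp [mem_uIcc, hx]))
  rw [setLIntegral_Ioc_ofReal hx1 hint fun u hu => inv_nonneg.2 (hx.trans hu.1).le,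
    integral_inv_of_pos hx one_pos, log_div one_ne_zero hx.ne', log_one, zero_sub]

theorem setLIntegral_Ioc_neg_log_sub {a b : ℝ} (hab : a ≤ b) (hba : b - a ≤ 1) :
    ∫⁻ s in Ioc a b, ENNReal.ofReal (-log (s - a)) =
      ENNReal.ofReal (b - a + negMulLog (b - a)) := by
  have hint : IntervalIntegrable (fun s => -log (s - a)) volume a b := by
    simpa using
      (intervalIntegral.intervalIntegrable_log' (a := a - a) (b := b - a)).neg.comp_sub_right a
  rw [setLIntegral_Ioc_ofReal hab hint fun s hs =>
      neg_nonneg.2 (log_nonpos (by linarith [hs.1]) (by linarith [hs.2])),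
    intervalIntegral.integral_neg, intervalIntegral.integral_comp_sub_right (fun x => log x),
    sub_self, integral_log, negMulLog]
  congr 1
  ring

theorem setLIntegral_Ioc_geom_sum (m : ℕ) :
    ∫⁻ u in Ioc 0 1, ENNReal.ofReal (∑ j ∈ Finset.range m, (1 - u) ^ j) =
      ENNReal.ofReal (∑ j ∈ Finset.range m, 1 / ((j : ℝ) + 1)) := by
  rw [setLIntegral_Ioc_ofReal (f := fun u => ∑ j ∈ Finset.range m, (1 - u) ^ j) zero_le_one
      ((by fun_prop : Continuous _).intervalIntegrable 0 1)
      fun u hu => Finset.sum_nonneg fun j _ => pow_nonneg (by linarith [hu.2]) j,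
    intervalIntegral.integral_finsetSum fun j _ =>
      (by fun_prop : Continuous fun u : ℝ => (1 - u) ^ j).intervalIntegrable 0 1]
  congr 1
  refine Finset.sum_congr rfl fun j _ => ?_
  rw [intervalIntegral.integral_comp_sub_left (fun x => x ^ j) 1]
  simp [integral_pow]

/-- `u⁻¹` if `{0} ∪ range c` meets `(s - u, s]`, else `0` (the disjunct `s < u` stands for the
point `0` when `0 ≤ s`). When `s` lies in a spacing `(a, a')` of the configuration it is
`u⁻¹ 𝟙{s - a < u}`, whose integral over `u ∈ (0, 1]` is `-log (s - a)`. -/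
noncomputable def gapKernel {n : ℕ} (c : Fin n → ℝ) (s u : ℝ) : ℝ≥0∞ :=
  if s < u ∨ ∃ i, c i ∈ Ioc (s - u) s then ENNReal.ofReal u⁻¹ else 0

section Pathwise

variable {K : ℕ} {a : ℕ → ℝ} {c : Fin (K - 1) → ℝ}

theorem sub_mem_Icc_of_monotoneOn (ha0 : a 0 = 0) (haK : a K = 1) (hmono : MonotoneOn a (Iic K))
    {k : ℕ} (hk : k < K) : a (k + 1) - a k ∈ Icc 0 1 := by
  have h0 : 0 ≤ a k := ha0 ▸ hmono (Nat.zero_le K) hk.le (Nat.zero_le k)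
  have h1 : a (k + 1) ≤ 1 := haK ▸ hmono (show k + 1 ≤ K by omega) (mem_Iic.2 le_rfl) hk
  exact ⟨by linarith [hmono hk.le (show k + 1 ≤ K by omega) k.le_succ], by linarith⟩

theorem gapKernel_eq_indicator_of_mem_Ioo (ha0 : a 0 = 0) (hmono : MonotoneOn a (Iic K))
    (σ : Equiv.Perm (Fin (K - 1))) (hσ : ∀ i : Fin (K - 1), a (i + 1) = c (σ i))
    {k : ℕ} (hk : k < K) {s : ℝ} (hs : s ∈ Ioo (a k) (a (k + 1))) (u : ℝ) :
    gapKernel c s u = (Ioi (s - a k)).indicator (fun u => ENNReal.ofReal u⁻¹) u := by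
  have hak : 0 ≤ a k := ha0 ▸ hmono (Nat.zero_le K) hk.le (Nat.zero_le k)
  have hiff : (s < u ∨ ∃ i, c i ∈ Ioc (s - u) s) ↔ s - a k < u := by
    constructor
    · rintro (hsu | ⟨i, hi₁, hi₂⟩)
      · linarith
      · obtain ⟨m, rfl⟩ := σ.surjective i
        rw [← hσ m] at hi₁ hi₂
        have hmk : (m : ℕ) + 1 ≤ k := by
          by_contra! h
          linarith [hs.2, hmono (show k + 1 ≤ K by omega) (show (m : ℕ) + 1 ≤ K by omega) h]
        linarith [hmono (show (m : ℕ) + 1 ≤ K by omega) hk.le hmk]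
    · intro h
      rcases k with _ | k
      · exact .inl (by simpa [ha0] using h)
      · refine .inr ⟨σ ⟨k, by omega⟩, ?_⟩
        rw [← hσ]
        exact ⟨by linarith, hs.1.le⟩
  simp only [gapKernel, indicator, mem_Ioi, hiff]

theorem setLIntegral_gapKernel_of_mem_Ioo (ha0 : a 0 = 0) (haK : a K = 1)
    (hmono : MonotoneOn a (Iic K))
    (σ : Equiv.Perm (Fin (K - 1))) (hσ : ∀ i : Fin (K - 1), a (i + 1) = c (σ i))
    {k : ℕ} (hk : k < K) {s : ℝ} (hs : s ∈ Ioo (a k) (a (k + 1))) :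
    ∫⁻ u in Ioc 0 1, gapKernel c s u = ENNReal.ofReal (-log (s - a k)) := by
  have hgap : s - a k ≤ 1 := by
    linarith [hs.2, (sub_mem_Icc_of_monotoneOn ha0 haK hmono hk).2]
  simp_rw [gapKernel_eq_indicator_of_mem_Ioo ha0 hmono σ hσ hk hs]
  rw [lintegral_indicator measurableSet_Ioi, Measure.restrict_restrict measurableSet_Ioi,
    inter_comm, Ioc_inter_Ioi, max_eq_right (by linarith [hs.1]),
    setLIntegral_Ioc_inv (by linarith [hs.1]) hgap]

theorem setLIntegral_setLIntegral_gapKernel (ha0 : a 0 = 0) (haK : a K = 1)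
    (hmono : MonotoneOn a (Iic K))
    (σ : Equiv.Perm (Fin (K - 1))) (hσ : ∀ i : Fin (K - 1), a (i + 1) = c (σ i)) :
    ∫⁻ s in Ioc 0 1, ∫⁻ u in Ioc 0 1, gapKernel c s u =
      ENNReal.ofReal (1 + ∑ k ∈ Finset.range K, negMulLog (a (k + 1) - a k)) := by
  have hgap : ∀ k ∈ Finset.range K, a (k + 1) - a k ∈ Icc 0 1 := fun k hk =>
    sub_mem_Icc_of_monotoneOn ha0 haK hmono (Finset.mem_range.1 hk)
  have hsplit := setLIntegral_Ioc_eq_sum_of_monotoneOn hmono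
    fun s => ∫⁻ u in Ioc 0 1, gapKernel c s u
  rw [ha0, haK] at hsplit
  calc _ = ∑ k ∈ Finset.range K,
        ∫⁻ s in Ioc (a k) (a (k + 1)), ENNReal.ofReal (-log (s - a k)) := by
        rw [hsplit]
        refine Finset.sum_congr rfl fun k hk => ?_
        rw [setLIntegral_congr Ioo_ae_eq_Ioc.symm, setLIntegral_congr Ioo_ae_eq_Ioc.symm]
        exact setLIntegral_congr_fun measurableSet_Ioo fun s hs =>
          setLIntegral_gapKernel_of_mem_Ioo ha0 haK hmono σ hσ (Finset.mem_range.1 hk) hs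
    _ = ∑ k ∈ Finset.range K, ENNReal.ofReal (a (k + 1) - a k + negMulLog (a (k + 1) - a k)) :=
        Finset.sum_congr rfl fun k hk => by
          simpa using setLIntegral_Ioc_neg_log_sub (by linarith [(hgap k hk).1]) (hgap k hk).2
    _ = _ := by
        rw [← ENNReal.ofReal_sum_of_nonneg fun k hk =>
            add_nonneg (hgap k hk).1 (negMulLog_nonneg (hgap k hk).1 (hgap k hk).2),
          Finset.sum_add_distrib, Finset.sum_range_sub, ha0, haK, sub_zero]

end Pathwise

section Probability

variable {Ω : Type*} [MeasurableSpace Ω] {P : Measure Ω}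

theorem measure_preimage_eq_volume_of_map_eq {X : Ω → ℝ} (hX : Measurable X)
    (hunif : P.map X = volume.restrict (Icc 0 1)) {B : Set ℝ} (hB : MeasurableSet B)
    (hB01 : B ⊆ Icc 0 1) : P (X ⁻¹' B) = volume B := by
  rw [← Measure.map_apply hX hB, hunif, Measure.restrict_apply hB, inter_eq_left.2 hB01]

variable [IsProbabilityMeasure P]

theorem ProbabilityTheory.iIndepFun.measure_iUnion_preimage {ι β : Type*} [Fintype ι]
    [MeasurableSpace β] {f : ι → Ω → β} (hf : iIndepFun f P) (hmeas : ∀ i, Measurable (f i))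
    {B : Set β} (hB : MeasurableSet B) :
    P (⋃ i, f i ⁻¹' B) = 1 - ∏ i, P (f i ⁻¹' Bᶜ) := by
  have hcompl := prob_compl_eq_one_sub (μ := P) (MeasurableSet.iUnion fun i => hmeas i hB).compl
  rw [compl_compl, compl_iUnion] at hcompl
  simp_rw [← preimage_compl] at hcompl
  rw [hcompl, hf.meas_iInter fun i => ⟨Bᶜ, hB.compl, rfl⟩]

variable {n : ℕ} {b : Fin n → Ω → ℝ}

theorem measurable_gapKernel (hb : ∀ i, Measurable (b i)) :
    Measurable fun q : (Ω × ℝ) × ℝ => gapKernel (fun i => b i q.1.1) q.1.2 q.2 := by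
  refine Measurable.ite ?_ (by fun_prop) measurable_const
  measurability

theorem measure_exists_mem_Ioc (hmeas : ∀ i, Measurable (b i))
    (hunif : ∀ i, P.map (b i) = volume.restrict (Icc 0 1)) (hindep : iIndepFun b P)
    {s u : ℝ} (hu : 0 ≤ u) (hus : u ≤ s) (hs : s ≤ 1) :
    P {ω | ∃ i, b i ω ∈ Ioc (s - u) s} = ENNReal.ofReal (1 - (1 - u) ^ n) := by
  have hB : Ioc (s - u) s ⊆ Icc 0 1 := fun x hx => ⟨by linarith [hx.1], hx.2.trans hs⟩
  have hcompl : ∀ i, P (b i ⁻¹' (Ioc (s - u) s)ᶜ) = ENNReal.ofReal (1 - u) := fun i => by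
    rw [preimage_compl, prob_compl_eq_one_sub (hmeas i measurableSet_Ioc),
      measure_preimage_eq_volume_of_map_eq (hmeas i) (hunif i) measurableSet_Ioc hB,
      volume_Ioc, sub_sub_cancel, ← ENNReal.ofReal_one, ← ENNReal.ofReal_sub _ hu]
  have := hindep.measure_iUnion_preimage hmeas (measurableSet_Ioc (a := s - u) (b := s))
  simp only [hcompl, Finset.prod_const, Finset.card_univ, Fintype.card_fin] at this
  rw [← ENNReal.ofReal_pow (by linarith), ← ENNReal.ofReal_one,
    ← ENNReal.ofReal_sub _ (pow_nonneg (by linarith) _)] at this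
  rw [← this]
  congr 1
  ext ω
  simp

theorem setLIntegral_lintegral_gapKernel (hmeas : ∀ i, Measurable (b i))
    (hunif : ∀ i, P.map (b i) = volume.restrict (Icc 0 1)) (hindep : iIndepFun b P)
    {u : ℝ} (hu : u ∈ Ioc 0 1) :
    ∫⁻ s in Ioc 0 1, ∫⁻ ω, gapKernel (fun i => b i ω) s u ∂P =
      ENNReal.ofReal (∑ j ∈ Finset.range (n + 1), (1 - u) ^ j) := by
  obtain ⟨hu0, hu1⟩ := hu
  have hω : ∀ s, ∫⁻ ω, gapKernel (fun i => b i ω) s u ∂P =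
      ENNReal.ofReal u⁻¹ * P {ω | s < u ∨ ∃ i, b i ω ∈ Ioc (s - u) s} := fun s => by
    rw [← lintegral_indicator_const (by measurability)]
    exact lintegral_congr fun ω => by simp [gapKernel, indicator_apply]
  have hnear : ∀ s ∈ Ioo 0 u, P {ω | s < u ∨ ∃ i, b i ω ∈ Ioc (s - u) s} = 1 := fun s hs => by
    simp [hs.2]
  have hfar : ∀ s ∈ Icc u 1, P {ω | s < u ∨ ∃ i, b i ω ∈ Ioc (s - u) s} =
      ENNReal.ofReal (1 - (1 - u) ^ n) := fun s hs => by
    simpa [hs.1.not_gt] using measure_exists_mem_Ioc hmeas hunif hindep hu0.le hs.1 hs.2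
  have hgeom : (∑ j ∈ Finset.range n, (1 - u) ^ j) * u = 1 - (1 - u) ^ n := by
    linear_combination -geom_sum_mul (1 - u) n
  have hpos : 0 ≤ 1 - (1 - u) ^ n := hgeom ▸ by positivity
  rw [lintegral_congr hω, lintegral_const_mul' _ _ ENNReal.ofReal_ne_top,
    ← Ioo_union_Icc_eq_Ioc hu0 hu1, lintegral_union measurableSet_Icc
      (disjoint_left.2 fun s h₁ h₂ => h₁.2.not_ge h₂.1),
    setLIntegral_congr_fun measurableSet_Ioo hnear, setLIntegral_congr_fun measurableSet_Icc hfar,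
    setLIntegral_const, setLIntegral_const, Real.volume_Ioo, Real.volume_Icc, one_mul, sub_zero,
    ← ENNReal.ofReal_mul hpos, ← ENNReal.ofReal_add hu0.le (mul_nonneg hpos (by linarith)),
    ← ENNReal.ofReal_mul (by positivity), geom_sum_succ, ← hgeom]
  congr 1
  field_simp
  ring

theorem lintegral_setLIntegral_setLIntegral_gapKernel (hmeas : ∀ i, Measurable (b i))
    (hunif : ∀ i, P.map (b i) = volume.restrict (Icc 0 1)) (hindep : iIndepFun b P) :
    ∫⁻ ω, (∫⁻ s in Ioc 0 1, ∫⁻ u in Ioc 0 1, gapKernel (fun i => b i ω) s u) ∂P =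
      ENNReal.ofReal (∑ j ∈ Finset.range (n + 1), 1 / ((j : ℝ) + 1)) := by
  have hk := measurable_gapKernel hmeas
  calc _ = ∫⁻ s in Ioc 0 1, ∫⁻ ω, (∫⁻ u in Ioc 0 1, gapKernel (fun i => b i ω) s u) ∂P :=
        lintegral_lintegral_swap hk.lintegral_prod_right'.aemeasurable
    _ = ∫⁻ s in Ioc 0 1, ∫⁻ u in Ioc 0 1, ∫⁻ ω, gapKernel (fun i => b i ω) s u ∂P :=
        lintegral_congr fun s =>
          lintegral_lintegral_swap (f := fun ω u => gapKernel (fun i => b i ω) s u)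
            (hk.comp (by fun_prop : Measurable fun p : Ω × ℝ => ((p.1, s), p.2))).aemeasurable
    _ = ∫⁻ u in Ioc 0 1, ∫⁻ s in Ioc 0 1, ∫⁻ ω, gapKernel (fun i => b i ω) s u ∂P :=
        lintegral_lintegral_swap (f := fun s u => ∫⁻ ω, gapKernel (fun i => b i ω) s u ∂P)
          (Measurable.lintegral_prod_left' (hk.comp
            (by fun_prop : Measurable fun q : Ω × ℝ × ℝ => ((q.1, q.2.1), q.2.2)))).aemeasurable
    _ = ∫⁻ u in Ioc 0 1, ENNReal.ofReal (∑ j ∈ Finset.range (n + 1), (1 - u) ^ j) :=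
        setLIntegral_congr_fun measurableSet_Ioc fun u hu =>
          setLIntegral_lintegral_gapKernel hmeas hunif hindep hu
    _ = _ := setLIntegral_Ioc_geom_sum (n + 1)

theorem integral_eq_of_lintegral_ofReal_one_add {f : Ω → ℝ} {g : Ω → ℝ≥0∞} (hg : Measurable g)
    (hf : ∀ ω, 0 ≤ f ω) (hfg : ∀ ω, g ω = ENNReal.ofReal (1 + f ω)) {c : ℝ} (hc : 0 ≤ c)
    (h : ∫⁻ ω, g ω ∂P = ENNReal.ofReal (1 + c)) : ∫ ω, f ω ∂P = c := by
  have hfg' : ∀ ω, g ω = 1 + ENNReal.ofReal (f ω) := fun ω => by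
    rw [hfg, ENNReal.ofReal_add zero_le_one (hf ω), ENNReal.ofReal_one]
  have hfmeas : Measurable f := by
    have : f = fun ω => (g ω - 1).toReal := funext fun ω => by
      rw [hfg', ENNReal.add_sub_cancel_left ENNReal.one_ne_top, ENNReal.toReal_ofReal (hf ω)]
    rw [this]
    exact (hg.sub_const 1).ennreal_toReal
  have hlint : ∫⁻ ω, ENNReal.ofReal (f ω) ∂P = ENNReal.ofReal c := by
    rw [lintegral_congr hfg', lintegral_add_left measurable_const, lintegral_const, measure_univ,
      mul_one, ENNReal.ofReal_add zero_le_one hc, ENNReal.ofReal_one] at h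
    exact (ENNReal.add_right_inj ENNReal.one_ne_top).1 h
  rw [integral_eq_lintegral_of_nonneg_ae (.of_forall hf) hfmeas.aestronglyMeasurable, hlint,
    ENNReal.toReal_ofReal hc]

end Probability

theorem sum_range_one_div_succ_eq_one_add (n : ℕ) :
    ∑ j ∈ Finset.range (n + 1), 1 / ((j : ℝ) + 1) =
      1 + ∑ k ∈ Finset.Icc 2 (n + 1), 1 / (k : ℝ) := by
  induction n with
  | zero => simp
  | succ n ih =>
    rw [Finset.sum_range_succ, ih, Finset.sum_Icc_succ_top (show 2 ≤ n + 1 + 1 by omega)]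
    push_cast
    ring

theorem stmt_9_general {Ω : Type*} [MeasurableSpace Ω] (P : Measure Ω) [IsProbabilityMeasure P]
    (K : ℕ) (b : Fin (K - 1) → Ω → ℝ)
    (hmeas : ∀ i, Measurable (b i))
    (hunif : ∀ i, Measure.map (b i) P = volume.restrict (Set.Icc 0 1))
    (hindep : iIndepFun b P)
    (A : Ω → ℕ → ℝ)
    (hA0 : ∀ ω, A ω 0 = 0) (hAK : ∀ ω, A ω K = 1)
    (hmono : ∀ ω, ∀ i j, i ≤ j → j ≤ K → A ω i ≤ A ω j)
    (hsort : ∀ ω, ∃ σ : Equiv.Perm (Fin (K - 1)),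
      ∀ i : Fin (K - 1), A ω ((i : ℕ) + 1) = b (σ i) ω) :
    ∫ ω, (-∑ k ∈ Finset.range K,
        (A ω (k + 1) - A ω k) * Real.logb 2 (A ω (k + 1) - A ω k)) ∂P =
      (1 / Real.log 2) * ∑ k ∈ Finset.Icc 2 K, (1 : ℝ) / k := by
  obtain ⟨ω₀⟩ := nonempty_of_isProbabilityMeasure P
  have hK : K ≠ 0 := by
    rintro rfl
    simpa [hA0] using hAK ω₀
  have hspacing : ∀ ω, ∀ k ∈ Finset.range K, A ω (k + 1) - A ω k ∈ Icc 0 1 := fun ω k hk =>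
    sub_mem_Icc_of_monotoneOn (hA0 ω) (hAK ω) (fun i _ j hj hij => hmono ω i j hij hj)
      (Finset.mem_range.1 hk)
  have hpath : ∀ ω, ∫⁻ s in Ioc 0 1, ∫⁻ u in Ioc 0 1, gapKernel (fun i => b i ω) s u =
      ENNReal.ofReal (1 + ∑ k ∈ Finset.range K, negMulLog (A ω (k + 1) - A ω k)) := fun ω => by
    obtain ⟨σ, hσ⟩ := hsort ω
    exact setLIntegral_setLIntegral_gapKernel (hA0 ω) (hAK ω)
      (fun i _ j hj hij => hmono ω i j hij hj) σ hσ
  have hexp := lintegral_setLIntegral_setLIntegral_gapKernel hmeas hunif hindep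
  rw [sum_range_one_div_succ_eq_one_add, Nat.sub_add_cancel (Nat.one_le_iff_ne_zero.2 hK)]
    at hexp
  have hent := integral_eq_of_lintegral_ofReal_one_add
    (measurable_gapKernel hmeas).lintegral_prod_right'.lintegral_prod_right'
    (fun ω => Finset.sum_nonneg fun k hk =>
      negMulLog_nonneg (hspacing ω k hk).1 (hspacing ω k hk).2)
    hpath (Finset.sum_nonneg fun k _ => by positivity) hexp
  calc _ = ∫ ω, 1 / log 2 * ∑ k ∈ Finset.range K, negMulLog (A ω (k + 1) - A ω k) ∂P := by
        congr 1 with ω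
        simp only [Finset.mul_sum, ← Finset.sum_neg_distrib, negMulLog, logb]
        exact Finset.sum_congr rfl fun k _ => by ring
    _ = _ := by rw [integral_const_mul, hent]

theorem stmt_9 {Ω : Type*} [MeasurableSpace Ω] (P : Measure Ω) [IsProbabilityMeasure P]
    (K : ℕ) (hK : 2 ≤ K) (b : Fin (K - 1) → Ω → ℝ)
    (hmeas : ∀ i, Measurable (b i))
    (hunif : ∀ i, Measure.map (b i) P = volume.restrict (Set.Icc 0 1))
    (hindep : iIndepFun b P)
    (A : Ω → ℕ → ℝ)
    (hA0 : ∀ ω, A ω 0 = 0) (hAK : ∀ ω, A ω K = 1)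
    (hmono : ∀ ω, ∀ i j, i ≤ j → j ≤ K → A ω i ≤ A ω j)
    (hsort : ∀ ω, ∃ σ : Equiv.Perm (Fin (K - 1)),
      ∀ i : Fin (K - 1), A ω ((i : ℕ) + 1) = b (σ i) ω) :
    ∫ ω, (-∑ k ∈ Finset.range K,
        (A ω (k + 1) - A ω k) * Real.logb 2 (A ω (k + 1) - A ω k)) ∂P =
      (1 / Real.log 2) * ∑ k ∈ Finset.Icc 2 K, (1 : ℝ) / k :=
  stmt_9_general P K b hmeas hunif hindep A hA0 hAK hmono hsort
end

section
/- For every positive integer n, 1/(24(n+1)²) ≤ H_n − γ − ln(n + 1/2) ≤ 1/(24 n²), where H_n is the n-th harmonic number and γ is the Euler–Mascheroni constant. -/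
/-!
The sequence g(m) = H_m - log (m + 1/2) tends to γ, and its steps are
g(k) - g(k+1) = log (1 + y) - log (1 - y) - 2y with y = 1/(2k+2), i.e. the tail
∑_{j ≥ 1} 2 y^(2j+1) / (2j+1) of the series of artanh. That tail lies between its first term
2y³/3 and the geometric bound 2y³/(3(1 - y²)), which are in turn squeezed between the steps of
1/(24 (k+1)²) and of 1/(24 k²). Summing these step inequalities from n to ∞ gives the bounds.
-/
open Real Filter Topology

section Comparison

variable {α : Type*} [AddCommGroup α] [PartialOrder α] [IsOrderedAddMonoid α]
  [TopologicalSpace α] [OrderClosedTopology α] [IsTopologicalAddGroup α]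

theorem sub_le_sub_of_tendsto_of_sub_succ_le {u v : ℕ → α} {L M : α} {n : ℕ}
    (hu : Tendsto u atTop (𝓝 L)) (hv : Tendsto v atTop (𝓝 M))
    (h : ∀ k ≥ n, u k - u (k + 1) ≤ v k - v (k + 1)) : u n - L ≤ v n - M := by
  have hanti : Antitone fun j => v (j + n) - u (j + n) := by
    refine antitone_nat_of_succ_le fun j => ?_
    have := h (j + n) (Nat.le_add_left n j)
    rw [sub_le_sub_iff] at this ⊢
    rwa [add_right_comm j 1 n, add_comm (v _)]
  have hlim : Tendsto (fun j => v (j + n) - u (j + n)) atTop (𝓝 (M - L)) :=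
    (hv.sub hu).comp (tendsto_add_atTop_nat n)
  have := hanti.le_of_tendsto hlim 0
  rw [zero_add, sub_le_sub_iff] at this
  rwa [sub_le_sub_iff, add_comm (u n)]

end Comparison

theorem Real.le_log_one_add_sub_log_one_sub_sub_two_mul {y : ℝ} (h₀ : 0 ≤ y) (h₁ : y < 1) :
    2 * y ^ 3 / 3 ≤ log (1 + y) - log (1 - y) - 2 * y := by
  have hs := hasSum_log_sub_log_of_abs_lt_one (x := y) (by rwa [abs_of_nonneg h₀])
  rw [← hasSum_nat_add_iff' 1] at hs
  have := le_hasSum hs 0 fun j _ => by positivity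
  norm_num at this
  linarith

theorem Real.log_one_add_sub_log_one_sub_sub_two_mul_le {y : ℝ} (h₀ : 0 ≤ y) (h₁ : y < 1) :
    log (1 + y) - log (1 - y) - 2 * y ≤ 2 * y ^ 3 / (3 * (1 - y ^ 2)) := by
  have hs := hasSum_log_sub_log_of_abs_lt_one (x := y) (by rwa [abs_of_nonneg h₀])
  rw [← hasSum_nat_add_iff' 1] at hs
  have hy2 : y ^ 2 < 1 := by nlinarith
  have hg := (hasSum_geometric_of_lt_one (by positivity) hy2).mul_left (2 * y ^ 3 / 3)
  have hterm (j : ℕ) : 2 * (1 / (2 * ↑(j + 1) + 1)) * y ^ (2 * (j + 1) + 1)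
      ≤ 2 * y ^ 3 / 3 * (y ^ 2) ^ j := by
    calc 2 * (1 / (2 * ↑(j + 1) + 1)) * y ^ (2 * (j + 1) + 1)
        ≤ 2 * (1 / 3) * y ^ (2 * (j + 1) + 1) := by
          gcongr
          push_cast
          linarith [j.cast_nonneg (α := ℝ)]
      _ = 2 * y ^ 3 / 3 * (y ^ 2) ^ j := by ring
  have := hasSum_le hterm hs hg
  norm_num at this
  rw [← div_div, div_eq_mul_inv]
  linarith

theorem Real.log_add_one_add_half_sub_log_add_half_sub_eq {x : ℝ} (hx : -1 / 2 < x) :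
    log (x + 1 + 1 / 2) - log (x + 1 / 2) - 1 / (x + 1)
      = log (1 + 1 / (2 * (x + 1))) - log (1 - 1 / (2 * (x + 1))) - 2 * (1 / (2 * (x + 1))) := by
  have hx₁ : x + 1 ≠ 0 := by linarith
  rw [show 1 + 1 / (2 * (x + 1)) = (x + 1 + 1 / 2) / (x + 1) by field_simp,
    show 1 - 1 / (2 * (x + 1)) = (x + 1 / 2) / (x + 1) by field_simp; ring,
    show 2 * (1 / (2 * (x + 1))) = 1 / (x + 1) by field_simp,
    log_div (by linarith) hx₁, log_div (by linarith) hx₁]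
  ring

theorem Real.le_log_add_one_add_half_sub_log_add_half_sub {x : ℝ} (hx : 0 ≤ x) :
    1 / (24 * (x + 1) ^ 2) - 1 / (24 * (x + 2) ^ 2)
      ≤ log (x + 1 + 1 / 2) - log (x + 1 / 2) - 1 / (x + 1) := by
  have hy₁ : 1 / (2 * (x + 1)) < 1 := by rw [div_lt_one (by positivity)]; linarith
  have := le_log_one_add_sub_log_one_sub_sub_two_mul (by positivity) hy₁
  rw [log_add_one_add_half_sub_log_add_half_sub_eq (by linarith)]
  calc 1 / (24 * (x + 1) ^ 2) - 1 / (24 * (x + 2) ^ 2) ≤ 1 / (12 * (x + 1) ^ 3) := by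
        rw [div_sub_div _ _ (by positivity) (by positivity),
          div_le_div_iff₀ (by positivity) (by positivity)]
        nlinarith [pow_nonneg hx 2, pow_nonneg hx 3, pow_nonneg hx 4, pow_nonneg hx 5]
    _ = 2 * (1 / (2 * (x + 1))) ^ 3 / 3 := by field_simp; ring
    _ ≤ _ := this

theorem Real.log_add_one_add_half_sub_log_add_half_sub_le {x : ℝ} (hx : 0 < x) :
    log (x + 1 + 1 / 2) - log (x + 1 / 2) - 1 / (x + 1)
      ≤ 1 / (24 * x ^ 2) - 1 / (24 * (x + 1) ^ 2) := by
  have hy₁ : 1 / (2 * (x + 1)) < 1 := by rw [div_lt_one (by positivity)]; linarith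
  have := log_one_add_sub_log_one_sub_sub_two_mul_le (by positivity) hy₁
  rw [log_add_one_add_half_sub_log_add_half_sub_eq (by linarith)]
  calc _ ≤ 2 * (1 / (2 * (x + 1))) ^ 3 / (3 * (1 - (1 / (2 * (x + 1))) ^ 2)) := this
    _ = 1 / (3 * (x + 1) * (2 * x + 1) * (2 * x + 3)) := by
        have : 1 - (1 / (2 * (x + 1))) ^ 2 = (2 * x + 1) * (2 * x + 3) / (4 * (x + 1) ^ 2) := by
          field_simp
          ring
        rw [this]
        field_simp
        ring
    _ ≤ 1 / (24 * x ^ 2) - 1 / (24 * (x + 1) ^ 2) := by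
        rw [div_sub_div _ _ (by positivity) (by positivity),
          div_le_div_iff₀ (by positivity) (by positivity)]
        nlinarith [pow_pos hx 2, pow_pos hx 3, pow_pos hx 4, pow_pos hx 5]

noncomputable def harmonicSubLogAddHalf (m : ℕ) : ℝ := harmonic m - log (m + 1 / 2)

theorem tendsto_harmonicSubLogAddHalf :
    Tendsto harmonicSubLogAddHalf atTop (𝓝 eulerMascheroniConstant) := by
  have := tendsto_harmonic_sub_log.sub
    ((tendsto_log_comp_add_sub_log (1 / 2)).comp tendsto_natCast_atTop_atTop)
  rw [sub_zero] at this
  refine this.congr fun m => ?_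
  simp only [harmonicSubLogAddHalf, Function.comp_apply]
  ring

theorem harmonicSubLogAddHalf_sub_succ (k : ℕ) :
    harmonicSubLogAddHalf k - harmonicSubLogAddHalf (k + 1)
      = log ((k : ℝ) + 1 + 1 / 2) - log (k + 1 / 2) - 1 / (k + 1) := by
  simp only [harmonicSubLogAddHalf, harmonic_succ]
  push_cast
  ring

theorem tendsto_one_div_mul_sq_atTop (c : ℝ) (hc : 0 < c) :
    Tendsto (fun x : ℝ => 1 / (c * x ^ 2)) atTop (𝓝 0) :=
  tendsto_const_nhds.div_atTop ((tendsto_pow_atTop two_ne_zero).const_mul_atTop hc)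

theorem stmt_12 (n : ℕ) (hn : 1 ≤ n) :
    1 / (24 * ((n : ℝ) + 1) ^ 2) ≤
        (∑ k ∈ Finset.Icc 1 n, (1 : ℝ) / k) - Real.eulerMascheroniConstant -
          Real.log ((n : ℝ) + 1 / 2) ∧
      (∑ k ∈ Finset.Icc 1 n, (1 : ℝ) / k) - Real.eulerMascheroniConstant -
          Real.log ((n : ℝ) + 1 / 2) ≤ 1 / (24 * (n : ℝ) ^ 2) := by
  have hlim := tendsto_one_div_mul_sq_atTop 24 (by norm_num)
  have lower := sub_le_sub_of_tendsto_of_sub_succ_le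
    (hlim.comp (tendsto_atTop_add_const_right _ 1 tendsto_natCast_atTop_atTop))
    tendsto_harmonicSubLogAddHalf (n := n) fun k _ => by
      rw [harmonicSubLogAddHalf_sub_succ, Function.comp_apply, Function.comp_apply]
      push_cast
      rw [add_assoc _ (1 : ℝ) 1, one_add_one_eq_two]
      exact le_log_add_one_add_half_sub_log_add_half_sub k.cast_nonneg
  have upper := sub_le_sub_of_tendsto_of_sub_succ_le tendsto_harmonicSubLogAddHalf
    (hlim.comp tendsto_natCast_atTop_atTop) (n := n) fun k hk => by
      rw [harmonicSubLogAddHalf_sub_succ, Function.comp_apply, Function.comp_apply]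
      push_cast
      exact log_add_one_add_half_sub_log_add_half_sub_le (by norm_cast; omega)
  have hH : ((harmonic n : ℚ) : ℝ) = ∑ k ∈ Finset.Icc 1 n, (1 : ℝ) / k := by
    simp [harmonic_eq_sum_Icc, one_div]
  simp only [harmonicSubLogAddHalf, Function.comp_apply, hH, sub_zero] at lower upper
  constructor <;> linarith
end

section
/- With M = min(a₁, Δ₀) for a₁ ~ Uniform[0, Δ₁) and 0 < Δ₀ < Δ₁, and L length-biased from M, E[−log₂ L] = log₂(1/Δ₀) + (1/(2 ln 2)) · Δ₀/(2Δ₁ − Δ₀). -/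
/-!
Since `L` is the size-biased version of `M`, `E[-log₂ L] = E[-M log₂ M] / E[M]`. The law of
`M` is the uniform density `1/Δ₁` on `[0, Δ₀)` plus an atom of mass `1 - Δ₀/Δ₁` at `Δ₀`, so both
expectations are elementary: `E[M] = Δ₀(2Δ₁ - Δ₀)/(2Δ₁)`, and `E[M log M]` follows from the
antiderivative `x²/2 · log x - x²/4` of `x log x`.
-/

open MeasureTheory

lemma integral_mul_log_from_zero {a : ℝ} (ha : 0 ≤ a) :
    ∫ x in (0 : ℝ)..a, x * Real.log x = a ^ 2 / 2 * Real.log a - a ^ 2 / 4 := by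
  have hderiv : ∀ x ∈ Set.Ioo 0 a,
      HasDerivAt (fun x => x / 2 * (x * Real.log x) - x ^ 2 / 4) (x * Real.log x) x := by
    intro x hx
    refine ((((hasDerivAt_id x).div_const 2).mul (Real.hasDerivAt_mul_log hx.1.ne')).sub
      (((hasDerivAt_id x).pow 2).div_const 4)).congr_deriv ?_
    simp only [id, Nat.cast_ofNat, Nat.add_one_sub_one, pow_one]
    ring
  have hcont : ContinuousOn (fun x => x / 2 * (x * Real.log x) - x ^ 2 / 4) (Set.Icc 0 a) :=
    (((continuous_id.div_const 2).mul Real.continuous_mul_log).sub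
      ((continuous_pow 2).div_const 4)).continuousOn
  rw [intervalIntegral.integral_eq_sub_of_hasDerivAt_of_le ha hcont hderiv
    (Real.continuous_mul_log.intervalIntegrable 0 a)]
  simp only [zero_div, zero_mul, ne_eq, OfNat.ofNat_ne_zero, not_false_eq_true, zero_pow,
    sub_self, sub_zero]
  ring

lemma integral_uniform_Ico {b : ℝ} (hb : 0 ≤ b) (f : ℝ → ℝ) :
    ∫ x, f x ∂((ENNReal.ofReal b)⁻¹ • volume.restrict (Set.Ico 0 b)) =
      b⁻¹ * ∫ x in (0 : ℝ)..b, f x := by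
  rw [integral_smul_measure, ENNReal.toReal_inv, ENNReal.toReal_ofReal hb, smul_eq_mul,
    integral_Ico_eq_integral_Ioo, intervalIntegral.integral_of_le hb,
    integral_Ioc_eq_integral_Ioo]

lemma intervalIntegral.integral_comp_min_of_le {a b c : ℝ} (hac : a ≤ c) (hcb : c ≤ b)
    {g : ℝ → ℝ} (hg : Continuous g) :
    ∫ x in a..b, g (min x c) = (∫ x in a..c, g x) + (b - c) * g c := by
  have hint : ∀ u v : ℝ, IntervalIntegrable (fun x => g (min x c)) volume u v := fun u v =>
    (hg.comp (continuous_id.min continuous_const)).intervalIntegrable u v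
  have below : ∫ x in a..c, g (min x c) = ∫ x in a..c, g x :=
    integral_congr fun x hx => by
      rw [Set.uIcc_of_le hac] at hx
      simp [min_eq_left hx.2]
  have above : ∫ x in c..b, g (min x c) = ∫ _ in c..b, g c :=
    integral_congr fun x hx => by
      rw [Set.uIcc_of_le hcb] at hx
      simp [min_eq_right hx.1]
  rw [← integral_add_adjacent_intervals (hint a c) (hint c b), below, above, integral_const,
    smul_eq_mul]

lemma integral_map_min_uniform {c b : ℝ} (hc : 0 ≤ c) (hcb : c ≤ b) {g : ℝ → ℝ}
    (hg : Continuous g) :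
    ∫ m, g m ∂(Measure.map (fun x => min x c)
        ((ENNReal.ofReal b)⁻¹ • volume.restrict (Set.Ico 0 b))) =
      b⁻¹ * ((∫ x in (0 : ℝ)..c, g x) + (b - c) * g c) := by
  have hmin : Continuous fun x : ℝ => min x c := by fun_prop
  rw [integral_map hmin.aemeasurable hg.aestronglyMeasurable,
    integral_uniform_Ico (hc.trans hcb), intervalIntegral.integral_comp_min_of_le hc hcb hg]

lemma ae_nonneg_map_min_uniform {c b : ℝ} (hc : 0 ≤ c) :
    ∀ᵐ m ∂(Measure.map (fun x => min x c)
        ((ENNReal.ofReal b)⁻¹ • volume.restrict (Set.Ico 0 b))), 0 ≤ m := by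
  have hmin : Measurable fun x : ℝ => min x c := by fun_prop
  rw [ae_map_iff hmin.aemeasurable measurableSet_Ici]
  refine Measure.ae_smul_measure ?_ _
  filter_upwards [ae_restrict_mem measurableSet_Ico] with x hx
  exact le_min hx.1 hc

lemma integral_withDensity_ofReal_div {X : Type*} [MeasurableSpace X] {μ : Measure X}
    {w : X → ℝ} (hw : Measurable w) (hw_nonneg : ∀ᵐ x ∂μ, 0 ≤ w x) {c : ℝ} (hc : 0 ≤ c)
    (f : X → ℝ) :
    ∫ x, f x ∂μ.withDensity (fun x => ENNReal.ofReal (w x / c)) = c⁻¹ * ∫ x, w x * f x ∂μ := by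
  rw [integral_withDensity_eq_integral_toReal_smul (hw.div_const c).ennreal_ofReal
      (Filter.Eventually.of_forall fun _ => ENNReal.ofReal_lt_top),
    ← integral_const_mul]
  refine integral_congr_ae ?_
  filter_upwards [hw_nonneg] with x hx
  rw [ENNReal.toReal_ofReal (div_nonneg hx hc), smul_eq_mul]
  ring

theorem stmt_16 (Δ₀ Δ₁ : ℝ) (h0 : 0 < Δ₀) (h01 : Δ₀ < Δ₁) :
    let μa : Measure ℝ := (ENNReal.ofReal Δ₁)⁻¹ • volume.restrict (Set.Ico 0 Δ₁)
    let μM : Measure ℝ := Measure.map (fun x => min x Δ₀) μa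
    let EM : ℝ := ∫ m, m ∂μM
    let μL : Measure ℝ := μM.withDensity (fun m => ENNReal.ofReal (m / EM))
    (∫ ℓ, -Real.logb 2 ℓ ∂μL) =
      Real.logb 2 (1 / Δ₀) + (1 / (2 * Real.log 2)) * (Δ₀ / (2 * Δ₁ - Δ₀)) := by
  intro μa μM EM μL
  have hEM : EM = Δ₀ * (2 * Δ₁ - Δ₀) / (2 * Δ₁) := by
    change ∫ m, id m ∂μM = _
    rw [integral_map_min_uniform h0.le h01.le continuous_id]
    simp only [id, integral_id]
    field_simp
    ring
  have hEM_pos : 0 < EM := by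
    rw [hEM]
    exact div_pos (mul_pos h0 (by linarith)) (by linarith)
  have hxlogb : ∀ x, x * -Real.logb 2 x = -(Real.log 2)⁻¹ * (x * Real.log x) := fun x => by
    rw [Real.logb]
    ring
  have hL : ∫ ℓ, -Real.logb 2 ℓ ∂μL = EM⁻¹ * ∫ m, m * -Real.logb 2 m ∂μM :=
    integral_withDensity_ofReal_div measurable_id' (ae_nonneg_map_min_uniform h0.le)
      hEM_pos.le _
  rw [hL, integral_congr_ae (.of_forall hxlogb), integral_const_mul,
    integral_map_min_uniform h0.le h01.le Real.continuous_mul_log,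
    integral_mul_log_from_zero h0.le, hEM, one_div, Real.logb_inv, Real.logb]
  have hΔ₁ : Δ₁ ≠ 0 := by linarith
  have hdenom : 2 * Δ₁ - Δ₀ ≠ 0 := by linarith
  have hlog2 : Real.log 2 ≠ 0 := (Real.log_pos one_lt_two).ne'
  field_simp
  ring
end

section
/- For θ ∈ (0, π/4], the function q_θ = ((1 − (3/4)tan θ)/(1 − (1/2)tan θ)) · exp(tan θ/(2 − tan θ)) is at most e/2, with equality at θ = π/4. -/
/-!
Put `t = tan θ` and `u = t / (2 - t)`. The rational factor is then exactly `(2 - u) / 2`, so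
`q_θ = (2 - u) e^u / 2`, and `2 - u ≤ e^(1 - u)` (from `x + 1 ≤ eˣ`) gives `q_θ ≤ e / 2`, with
equality when `u = 1`, i.e. `θ = π / 4`.
-/

open Real

theorem two_sub_mul_exp_le_exp_one (u : ℝ) : (2 - u) * exp u ≤ exp 1 :=
  calc (2 - u) * exp u ≤ exp (1 - u) * exp u := by
        gcongr
        linarith [add_one_le_exp (1 - u)]
    _ = exp 1 := by rw [← exp_add, sub_add_cancel]

theorem one_sub_div_one_sub_eq {t : ℝ} (ht : t ≠ 2) :
    (1 - (3 / 4) * t) / (1 - (1 / 2) * t) = (2 - t / (2 - t)) / 2 := by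
  have h : 2 - t ≠ 0 := sub_ne_zero.mpr ht.symm
  have h' : 1 - (1 / 2) * t ≠ 0 := fun h0 => h (by linarith)
  field_simp
  ring

theorem one_sub_div_one_sub_mul_exp_le {t : ℝ} (ht : t ≠ 2) :
    ((1 - (3 / 4) * t) / (1 - (1 / 2) * t)) * exp (t / (2 - t)) ≤ exp 1 / 2 := by
  rw [one_sub_div_one_sub_eq ht, div_mul_eq_mul_div]
  gcongr
  exact two_sub_mul_exp_le_exp_one _

theorem tan_le_one_of_le_pi_div_four {θ : ℝ} (h₀ : -(π / 2) < θ) (h : θ ≤ π / 4) : tan θ ≤ 1 := by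
  have hπ := pi_pos
  rw [← tan_pi_div_four]
  exact strictMonoOn_tan.monotoneOn ⟨h₀, by linarith⟩ ⟨by linarith, by linarith⟩ h

theorem stmt_17 :
    (∀ θ ∈ Set.Ioc (0:ℝ) (π / 4),
        ((1 - (3 / 4) * tan θ) / (1 - (1 / 2) * tan θ)) *
            Real.exp (tan θ / (2 - tan θ)) ≤ Real.exp 1 / 2) ∧
      ((1 - (3 / 4) * tan (π / 4)) / (1 - (1 / 2) * tan (π / 4))) *
          Real.exp (tan (π / 4) / (2 - tan (π / 4))) = Real.exp 1 / 2 := by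
  refine ⟨fun θ hθ => one_sub_div_one_sub_mul_exp_le ?_, ?_⟩
  · have ht : tan θ ≤ 1 := tan_le_one_of_le_pi_div_four (by linarith [hθ.1, pi_pos]) hθ.2
    linarith
  · rw [tan_pi_div_four]
    norm_num
    ring
end

section
/- For t ∈ [0,1], the function g(t) = ((1 − (3/4)t)/(1 − (1/2)t)) · exp(t/(2 − t)) is monotonically increasing on [0,1], with g(0) = 1 and g(1) = e/2. -/
open Real Set

noncomputable def framePenalty (t : ℝ) : ℝ :=
  ((1 - (3 / 4) * t) / (1 - (1 / 2) * t)) * exp (t / (2 - t))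

lemma hasDerivAt_framePenalty {t : ℝ} (ht : 2 - t ≠ 0) :
    HasDerivAt framePenalty (2 * (1 - t) * exp (t / (2 - t)) / (2 - t) ^ 3) t := by
  have ht' : 1 - (1 / 2) * t ≠ 0 := by contrapose! ht; linarith
  have hq : HasDerivAt (fun t : ℝ => (1 - (3 / 4) * t) / (1 - (1 / 2) * t))
      ((-(3 / 4) * (1 - (1 / 2) * t) - (1 - (3 / 4) * t) * -(1 / 2)) / (1 - (1 / 2) * t) ^ 2) t :=
    (((hasDerivAt_id t).const_mul _).const_sub _).div
      (((hasDerivAt_id t).const_mul _).const_sub _) ht' |>.congr_deriv (by simp)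
  have hr : HasDerivAt (fun t : ℝ => t / (2 - t)) ((1 * (2 - t) - t * -1) / (2 - t) ^ 2) t :=
    (hasDerivAt_id t).div ((hasDerivAt_id t).const_sub 2) ht |>.congr_deriv (by simp)
  refine (hq.mul hr.exp).congr_deriv ?_
  field_simp
  ring

lemma strictMonoOn_framePenalty : StrictMonoOn framePenalty (Iic 1) := by
  have hne : ∀ t ≤ (1 : ℝ), 2 - t ≠ 0 := fun t ht => by linarith
  refine strictMonoOn_of_deriv_pos (convex_Iic 1)
    (fun t ht => (hasDerivAt_framePenalty (hne t ht)).continuousAt.continuousWithinAt) ?_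
  intro t ht
  rw [interior_Iic, mem_Iio] at ht
  rw [(hasDerivAt_framePenalty (hne t ht.le)).deriv]
  have h2 : 0 < 2 - t := by linarith
  have h1 : 0 < 1 - t := by linarith
  positivity

theorem stmt_19 :
    MonotoneOn
        (fun t : ℝ => ((1 - (3 / 4) * t) / (1 - (1 / 2) * t)) * Real.exp (t / (2 - t)))
        (Set.Icc 0 1) ∧
      ((1 - (3 / 4) * (0:ℝ)) / (1 - (1 / 2) * (0:ℝ))) * Real.exp ((0:ℝ) / (2 - 0)) = 1 ∧
      ((1 - (3 / 4) * (1:ℝ)) / (1 - (1 / 2) * (1:ℝ))) * Real.exp ((1:ℝ) / (2 - 1)) =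
        Real.exp 1 / 2 := by
  refine ⟨(strictMonoOn_framePenalty.mono Icc_subset_Iic_self).monotoneOn, by norm_num, ?_⟩
  norm_num
  ring
end
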